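/- arXiv:2404.11564 — 4 statements merged into one kernel-verified Lean document; each statement's English description precedes it below -/
import Mathlib

section
/- Neveu's inequality: let q ∈ (1,2]. For a nonnegative random variable X with E[X^q] < ∞ define V_q(X) = E[X^q] - (E[X])^q. Then for independent nonnegative random variables X, Y with finite q-th moments, V_q(X+Y) ≤ V_q(X) + V_q(Y). -/
/-!
With `φ(x, y) = (x + y) ^ q - x ^ q - y ^ q` (`rpowAddGap q`),
`V(X + Y) - V(X) - V(Y) = E φ(X, Y) - φ(E X, E Y)`.
For `1 ≤ q ≤ 2` and `c ≥ 0`, `x ↦ φ(x, c)` is concave on `[0, ∞)`: its derivative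
`q ((x + c) ^ (q - 1) - x ^ (q - 1))` decreases, as `t ↦ t ^ (q - 2)` does.
Independence lets one integrate `φ(X, Y)` first in `Y` and then in `X` (Fubini), and Jensen's
inequality in each variable gives `E φ(X, Y) ≤ E φ(X, E Y) ≤ φ(E X, E Y)`.
-/

open MeasureTheory ProbabilityTheory Set

noncomputable def rpowAddGap (q x y : ℝ) : ℝ := (x + y) ^ q - x ^ q - y ^ q

lemma rpowAddGap_comm (q x y : ℝ) : rpowAddGap q x y = rpowAddGap q y x := by
  simp only [rpowAddGap, add_comm x y]; ring

lemma continuous_rpow_add_sub_rpow {p : ℝ} (hp : 0 ≤ p) (c : ℝ) :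
    Continuous fun x : ℝ => (x + c) ^ p - x ^ p := by
  have := Real.continuous_rpow_const hp
  fun_prop

lemma continuous_rpowAddGap {q : ℝ} (hq : 0 ≤ q) (c : ℝ) :
    Continuous fun x : ℝ => rpowAddGap q x c := by
  have := Real.continuous_rpow_const hq
  unfold rpowAddGap
  fun_prop

lemma measurable_rpowAddGap (q : ℝ) : Measurable fun z : ℝ × ℝ => rpowAddGap q z.1 z.2 := by
  unfold rpowAddGap
  fun_prop

lemma hasDerivAt_rpow_add_sub_rpow (p : ℝ) {c x : ℝ} (hc : 0 ≤ c) (hx : 0 < x) :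
    HasDerivAt (fun x : ℝ => (x + c) ^ p - x ^ p)
      (p * (x + c) ^ (p - 1) - p * x ^ (p - 1)) x := by
  have hxc : HasDerivAt (fun x : ℝ => (x + c) ^ p) (p * (x + c) ^ (p - 1)) x := by
    simpa [Function.comp_def] using (Real.hasDerivAt_rpow_const (p := p)
      (Or.inl (by positivity))).comp x ((hasDerivAt_id x).add_const c)
  exact hxc.sub (Real.hasDerivAt_rpow_const (Or.inl hx.ne'))

lemma antitoneOn_rpow_add_sub_rpow {p c : ℝ} (hp0 : 0 ≤ p) (hp1 : p ≤ 1) (hc : 0 ≤ c) :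
    AntitoneOn (fun x : ℝ => (x + c) ^ p - x ^ p) (Ici 0) := by
  refine antitoneOn_of_deriv_nonpos (convex_Ici 0)
    (continuous_rpow_add_sub_rpow hp0 c).continuousOn ?_ ?_ <;> rw [interior_Ici]
  · exact fun x hx =>
      (hasDerivAt_rpow_add_sub_rpow p hc hx).differentiableAt.differentiableWithinAt
  · intro x hx
    rw [(hasDerivAt_rpow_add_sub_rpow p hc hx).deriv, ← mul_sub]
    exact mul_nonpos_of_nonneg_of_nonpos hp0 <| sub_nonpos.2 <|
      Real.rpow_le_rpow_of_nonpos hx (by linarith) (by linarith)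

lemma concaveOn_rpowAddGap {q c : ℝ} (hq1 : 1 ≤ q) (hq2 : q ≤ 2) (hc : 0 ≤ c) :
    ConcaveOn ℝ (Ici 0) fun x => rpowAddGap q x c := by
  have hdiff : ∀ x ∈ interior (Ici (0 : ℝ)), HasDerivAt (fun x : ℝ => (x + c) ^ q - x ^ q)
      (q * ((x + c) ^ (q - 1) - x ^ (q - 1))) x := fun x hx => by
    rw [interior_Ici] at hx
    simpa only [mul_sub] using hasDerivAt_rpow_add_sub_rpow q hc hx
  have hconc : ConcaveOn ℝ (Ici 0) fun x : ℝ => (x + c) ^ q - x ^ q := by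
    refine AntitoneOn.concaveOn_of_deriv (convex_Ici 0)
      (continuous_rpow_add_sub_rpow (by linarith) c).continuousOn
      (fun x hx => (hdiff x hx).differentiableAt.differentiableWithinAt) ?_
    intro a ha b hb hab
    rw [(hdiff a ha).deriv, (hdiff b hb).deriv]
    rw [interior_Ici] at ha hb
    exact mul_le_mul_of_nonneg_left (antitoneOn_rpow_add_sub_rpow (by linarith) (by linarith) hc
      (mem_Ici.2 ha.le) (mem_Ici.2 hb.le) hab) (by linarith)
  exact hconc.sub (convexOn_const _ (convex_Ici 0))

section
variable {Ω : Type*} [MeasurableSpace Ω] {μ : Measure Ω}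

lemma memLp_of_integrable_rpow {q : ℝ} (hq : 0 < q) {Z : Ω → ℝ} (hZm : AEStronglyMeasurable Z μ)
    (hZ0 : ∀ ω, 0 ≤ Z ω) (hZ : Integrable (fun ω => Z ω ^ q) μ) :
    MemLp Z (ENNReal.ofReal q) μ := by
  rw [← integrable_norm_rpow_iff hZm (by simpa using hq) ENNReal.ofReal_ne_top,
    ENNReal.toReal_ofReal hq.le]
  simpa only [Real.norm_of_nonneg (hZ0 _)] using hZ

lemma MeasureTheory.MemLp.integrable_rpow_of_nonneg [IsFiniteMeasure μ] {q : ℝ} (hq : 0 ≤ q)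
    {Z : Ω → ℝ} (hZ : MemLp Z (ENNReal.ofReal q) μ) (hZ0 : ∀ ω, 0 ≤ Z ω) :
    Integrable (fun ω => Z ω ^ q) μ := by
  simpa only [Real.norm_of_nonneg (hZ0 _), ENNReal.toReal_ofReal hq] using
    hZ.integrable_norm_rpow'

lemma MeasureTheory.MemLp.integrable_rpowAddGap [IsFiniteMeasure μ] {q : ℝ} (hq : 0 ≤ q)
    {Z W : Ω → ℝ} (hZ : MemLp Z (ENNReal.ofReal q) μ) (hW : MemLp W (ENNReal.ofReal q) μ)
    (hZ0 : ∀ ω, 0 ≤ Z ω) (hW0 : ∀ ω, 0 ≤ W ω) :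
    Integrable (fun ω => rpowAddGap q (Z ω) (W ω)) μ :=
  (((hZ.add hW).integrable_rpow_of_nonneg hq fun ω => add_nonneg (hZ0 ω) (hW0 ω)).sub
    (hZ.integrable_rpow_of_nonneg hq hZ0)).sub (hW.integrable_rpow_of_nonneg hq hW0)

lemma integral_rpowAddGap [IsFiniteMeasure μ] {q : ℝ} (hq : 0 ≤ q) {Z W : Ω → ℝ}
    (hZ : MemLp Z (ENNReal.ofReal q) μ) (hW : MemLp W (ENNReal.ofReal q) μ)
    (hZ0 : ∀ ω, 0 ≤ Z ω) (hW0 : ∀ ω, 0 ≤ W ω) :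
    ∫ ω, rpowAddGap q (Z ω) (W ω) ∂μ =
      ∫ ω, (Z ω + W ω) ^ q ∂μ - ∫ ω, Z ω ^ q ∂μ - ∫ ω, W ω ^ q ∂μ := by
  have hZW : Integrable (fun ω => (Z ω + W ω) ^ q) μ :=
    (hZ.add hW).integrable_rpow_of_nonneg hq fun ω => add_nonneg (hZ0 ω) (hW0 ω)
  have hZq := hZ.integrable_rpow_of_nonneg hq hZ0
  simp only [rpowAddGap]
  rw [integral_sub (f := fun ω => (Z ω + W ω) ^ q - Z ω ^ q) (hZW.sub hZq)
    (hW.integrable_rpow_of_nonneg hq hW0), integral_sub hZW hZq]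

end

section
variable {Ω α β E : Type*} [MeasurableSpace Ω] {μ : Measure Ω} [IsFiniteMeasure μ]
  [MeasurableSpace α] [MeasurableSpace β] [NormedAddCommGroup E]
  {X : Ω → α} {Y : Ω → β} {F : α × β → E}

theorem ProbabilityTheory.IndepFun.integrable_map_prod_map (hXY : X ⟂ᵢ[μ] Y)
    (hX : AEMeasurable X μ) (hY : AEMeasurable Y μ) (hF : StronglyMeasurable F)
    (hFi : Integrable (fun ω => F (X ω, Y ω)) μ) :
    Integrable F ((μ.map X).prod (μ.map Y)) := by
  rw [← hXY.map_prod_eq_prod_map_map hX hY]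
  exact (integrable_map_measure hF.aestronglyMeasurable (hX.prodMk hY)).2 hFi

theorem ProbabilityTheory.IndepFun.integral_comp_eq_integral_integral [NormedSpace ℝ E]
    (hXY : X ⟂ᵢ[μ] Y) (hX : AEMeasurable X μ) (hY : AEMeasurable Y μ) (hF : StronglyMeasurable F)
    (hFi : Integrable (fun ω => F (X ω, Y ω)) μ) :
    ∫ ω, F (X ω, Y ω) ∂μ = ∫ ω, ∫ ω', F (X ω, Y ω') ∂μ ∂μ := by
  have hFi' := hXY.integrable_map_prod_map hX hY hF hFi
  rw [← integral_map (φ := fun ω => (X ω, Y ω)) (hX.prodMk hY) hF.aestronglyMeasurable,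
    hXY.map_prod_eq_prod_map_map hX hY, integral_prod F hFi',
    integral_map hX hF.integral_prod_right'.aestronglyMeasurable]
  congr with ω
  exact integral_map hY (hF.comp_measurable measurable_prodMk_left).aestronglyMeasurable

theorem ProbabilityTheory.IndepFun.integrable_integral_comp [NormedSpace ℝ E]
    (hXY : X ⟂ᵢ[μ] Y) (hX : AEMeasurable X μ) (hY : AEMeasurable Y μ) (hF : StronglyMeasurable F)
    (hFi : Integrable (fun ω => F (X ω, Y ω)) μ) :
    Integrable (fun ω => ∫ ω', F (X ω, Y ω') ∂μ) μ := by
  have hFi' := hXY.integrable_map_prod_map hX hY hF hFi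
  have := (integrable_map_measure hF.integral_prod_right'.aestronglyMeasurable hX).1
    hFi'.integral_prod_left
  refine this.congr (ae_of_all _ fun ω => ?_)
  exact integral_map hY (hF.comp_measurable measurable_prodMk_left).aestronglyMeasurable

end

section
variable {Ω : Type*} [MeasurableSpace Ω] {μ : Measure Ω} [IsProbabilityMeasure μ] {q : ℝ}

lemma integral_rpowAddGap_le (hq1 : 1 ≤ q) (hq2 : q ≤ 2) {Z : Ω → ℝ}
    (hZ : MemLp Z (ENNReal.ofReal q) μ) (hZ0 : ∀ ω, 0 ≤ Z ω) {c : ℝ} (hc : 0 ≤ c) :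
    ∫ ω, rpowAddGap q (Z ω) c ∂μ ≤ rpowAddGap q (∫ ω, Z ω ∂μ) c :=
  (concaveOn_rpowAddGap hq1 hq2 hc).le_map_integral
    (continuous_rpowAddGap (by linarith) c).continuousOn isClosed_Ici (ae_of_all _ hZ0)
    (hZ.integrable (ENNReal.one_le_ofReal.2 hq1))
    (hZ.integrable_rpowAddGap (by linarith) (memLp_const c) hZ0 fun _ => hc)

theorem integral_rpowAddGap_le_of_indepFun (hq1 : 1 ≤ q) (hq2 : q ≤ 2) {X Y : Ω → ℝ}
    (hXY : X ⟂ᵢ[μ] Y) (hX : MemLp X (ENNReal.ofReal q) μ) (hY : MemLp Y (ENNReal.ofReal q) μ)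
    (hX0 : ∀ ω, 0 ≤ X ω) (hY0 : ∀ ω, 0 ≤ Y ω) :
    ∫ ω, rpowAddGap q (X ω) (Y ω) ∂μ ≤ rpowAddGap q (∫ ω, X ω ∂μ) (∫ ω, Y ω ∂μ) := by
  have hq0 : 0 ≤ q := by linarith
  have hF := (measurable_rpowAddGap q).stronglyMeasurable
  have hFi := hX.integrable_rpowAddGap hq0 hY hX0 hY0
  calc ∫ ω, rpowAddGap q (X ω) (Y ω) ∂μ
      = ∫ ω, ∫ ω', rpowAddGap q (X ω) (Y ω') ∂μ ∂μ :=
        hXY.integral_comp_eq_integral_integral hX.1.aemeasurable hY.1.aemeasurable hF hFi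
    _ ≤ ∫ ω, rpowAddGap q (X ω) (∫ ω', Y ω' ∂μ) ∂μ := by
        refine integral_mono
          (hXY.integrable_integral_comp hX.1.aemeasurable hY.1.aemeasurable hF hFi)
          (hX.integrable_rpowAddGap hq0 (memLp_const _) hX0 fun _ => integral_nonneg hY0)
          fun ω => ?_
        simp only [rpowAddGap_comm q (X ω)]
        exact integral_rpowAddGap_le hq1 hq2 hY hY0 (hX0 ω)
    _ ≤ rpowAddGap q (∫ ω, X ω ∂μ) (∫ ω, Y ω ∂μ) :=
        integral_rpowAddGap_le hq1 hq2 hX hX0 (integral_nonneg hY0)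

end

theorem neveu_inequality {Ω : Type*} [MeasurableSpace Ω] (μ : Measure Ω)
    [IsProbabilityMeasure μ] (q : ℝ) (hq1 : 1 < q) (hq2 : q ≤ 2)
    (X Y : Ω → ℝ) (hXm : Measurable X) (hYm : Measurable Y)
    (hX0 : ∀ ω, 0 ≤ X ω) (hY0 : ∀ ω, 0 ≤ Y ω)
    (hXq : Integrable (fun ω => X ω ^ q) μ) (hYq : Integrable (fun ω => Y ω ^ q) μ)
    (hindep : IndepFun X Y μ)
    (V : (Ω → ℝ) → ℝ) (hV : ∀ Z : Ω → ℝ, V Z = ∫ ω, Z ω ^ q ∂μ - (∫ ω, Z ω ∂μ) ^ q) :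
    V (X + Y) ≤ V X + V Y := by
  have hq0 : 0 < q := by linarith
  have hX := memLp_of_integrable_rpow hq0 hXm.aestronglyMeasurable hX0 hXq
  have hY := memLp_of_integrable_rpow hq0 hYm.aestronglyMeasurable hY0 hYq
  have hgap := integral_rpowAddGap_le_of_indepFun hq1.le hq2 hindep hX hY hX0 hY0
  rw [integral_rpowAddGap hq0.le hX hY hX0 hY0, rpowAddGap] at hgap
  have hmean : ∫ ω, (X + Y) ω ∂μ = ∫ ω, X ω ∂μ + ∫ ω, Y ω ∂μ :=
    integral_add (hX.integrable (ENNReal.one_le_ofReal.2 hq1.le))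
      (hY.integrable (ENNReal.one_le_ofReal.2 hq1.le))
  rw [hV, hV, hV, hmean]
  simp only [Pi.add_apply]
  linarith
end

section
/- Corollary of Neveu's inequality: let q ∈ (1,2] and let X₁,…,X_n be independent nonnegative random variables with finite q-th moments. Then E[(Σᵢ Xᵢ)^q] ≤ (Σᵢ E[Xᵢ])^q + Σᵢ E[Xᵢ^q]. -/
/-!
Induct on the number of summands. With `S` the partial sum and `Y` the next, independent summand,
the pointwise bound `(S + Y)^q ≤ S^q + q S^(q-1) Y + Y^q` (subadditivity of `x ↦ x^(q-1)`, as
`q - 1 ≤ 1`) integrates to `E S^q + q E[S^(q-1)] E Y + E Y^q` by independence. Jensen for the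
concave `x ↦ x^(q-1)` bounds `E[S^(q-1)]` by `(E S)^(q-1)`, and the tangent-line inequality for the
convex `x ↦ x^q` absorbs `(E S)^q + q (E S)^(q-1) E Y` into `(E S + E Y)^q`.

Both elementary inequalities come from `(a + b)^q - a^q = q ∫₀ᵇ (a + s)^(q-1) ds` by comparing
integrands.
-/

open MeasureTheory ProbabilityTheory

namespace Real

lemma rpow_add_eq_add_mul_integral (a b : ℝ) {q : ℝ} (hq : 0 < q) :
    (a + b) ^ q = a ^ q + q * ∫ s in (0 : ℝ)..b, (a + s) ^ (q - 1) := by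
  rw [intervalIntegral.integral_comp_add_left (· ^ (q - 1)), integral_rpow (by left; linarith),
    sub_add_cancel, add_zero, mul_div_cancel₀ _ hq.ne']
  ring

lemma intervalIntegrable_add_rpow (a : ℝ) {p : ℝ} (hp : 0 ≤ p) (b c : ℝ) :
    IntervalIntegrable (fun s => (a + s) ^ p) volume b c :=
  ((continuous_const_add a).rpow_const fun _ => Or.inr hp).intervalIntegrable b c

lemma add_rpow_le_add_mul_rpow_sub_one_add_rpow {a b q : ℝ} (ha : 0 ≤ a) (hb : 0 ≤ b)
    (hq1 : 1 ≤ q) (hq2 : q ≤ 2) : (a + b) ^ q ≤ a ^ q + q * a ^ (q - 1) * b + b ^ q := by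
  have hp : 0 ≤ q - 1 := by linarith
  have hsub : ∫ s in (0 : ℝ)..b, (a + s) ^ (q - 1) ≤
      ∫ s in (0 : ℝ)..b, (a ^ (q - 1) + (0 + s) ^ (q - 1)) :=
    intervalIntegral.integral_mono_on hb (intervalIntegrable_add_rpow a hp 0 b)
      (intervalIntegrable_const.add (intervalIntegrable_add_rpow 0 hp 0 b))
      fun s hs => by simpa using rpow_add_le_add_rpow ha hs.1 hp (by linarith)
  rw [intervalIntegral.integral_add intervalIntegrable_const (intervalIntegrable_add_rpow 0 hp 0 b),
    intervalIntegral.integral_const, smul_eq_mul, sub_zero] at hsub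
  rw [rpow_add_eq_add_mul_integral a b (by linarith), ← zero_add b,
    rpow_add_eq_add_mul_integral 0 b (by linarith), zero_add, zero_rpow (by linarith)]
  nlinarith

lemma add_mul_rpow_sub_one_le_add_rpow {a b q : ℝ} (ha : 0 ≤ a) (hb : 0 ≤ b) (hq : 1 ≤ q) :
    a ^ q + q * a ^ (q - 1) * b ≤ (a + b) ^ q := by
  have hp : 0 ≤ q - 1 := by linarith
  have hsub : ∫ _ in (0 : ℝ)..b, a ^ (q - 1) ≤ ∫ s in (0 : ℝ)..b, (a + s) ^ (q - 1) :=
    intervalIntegral.integral_mono_on hb intervalIntegrable_const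
      (intervalIntegrable_add_rpow a hp 0 b)
      fun s hs => rpow_le_rpow ha (by linarith [hs.1]) hp
  rw [intervalIntegral.integral_const, smul_eq_mul, sub_zero] at hsub
  rw [rpow_add_eq_add_mul_integral a b (by linarith)]
  nlinarith

end Real

section Moments

variable {Ω : Type*} [MeasurableSpace Ω] {μ : Measure Ω} {f : Ω → ℝ} {p : ℝ}

lemma memLp_ofReal_of_integrable_rpow (hf : AEStronglyMeasurable f μ) (hf0 : ∀ ω, 0 ≤ f ω)
    (hp : 0 < p) (hfp : Integrable (fun ω => f ω ^ p) μ) : MemLp f (ENNReal.ofReal p) μ := by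
  rw [← integrable_norm_rpow_iff hf (by simpa using hp) ENNReal.ofReal_ne_top,
    ENNReal.toReal_ofReal hp.le]
  simpa only [Real.norm_of_nonneg (hf0 _)] using hfp

lemma MeasureTheory.MemLp.integrable_rpow_of_nonneg_s9 [IsFiniteMeasure μ]
    (hf : MemLp f (ENNReal.ofReal p) μ) (hf0 : ∀ ω, 0 ≤ f ω) (hp : 0 ≤ p) :
    Integrable (fun ω => f ω ^ p) μ := by
  simpa only [Real.norm_of_nonneg (hf0 _), ENNReal.toReal_ofReal hp] using
    hf.integrable_norm_rpow'

lemma integral_rpow_le_rpow_integral [IsProbabilityMeasure μ] (hf : Integrable f μ)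
    (hf0 : ∀ ω, 0 ≤ f ω) (hp0 : 0 ≤ p) (hp1 : p ≤ 1) :
    ∫ ω, f ω ^ p ∂μ ≤ (∫ ω, f ω ∂μ) ^ p := by
  have hfp : MemLp f (ENNReal.ofReal p) μ :=
    (memLp_one_iff_integrable.2 hf).mono_exponent (by simpa using hp1)
  exact (Real.concaveOn_rpow hp0 hp1).le_map_integral
    (Real.continuous_rpow_const hp0).continuousOn isClosed_Ici
    (Filter.Eventually.of_forall hf0) hf (hfp.integrable_rpow_of_nonneg_s9 hf0 hp0)

end Moments

section Neveu

variable {Ω : Type*} [MeasurableSpace Ω] {μ : Measure Ω} [IsProbabilityMeasure μ] {q : ℝ}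

lemma integral_add_rpow_le_of_indepFun {S Y : Ω → ℝ} (hS0 : ∀ ω, 0 ≤ S ω) (hY0 : ∀ ω, 0 ≤ Y ω)
    (hS : MemLp S (ENNReal.ofReal q) μ) (hY : MemLp Y (ENNReal.ofReal q) μ)
    (hSY : IndepFun S Y μ) (hq1 : 1 ≤ q) (hq2 : q ≤ 2) :
    ∫ ω, (S ω + Y ω) ^ q ∂μ ≤
      ∫ ω, S ω ^ q ∂μ + q * (∫ ω, S ω ∂μ) ^ (q - 1) * ∫ ω, Y ω ∂μ + ∫ ω, Y ω ^ q ∂μ := by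
  have hp : 0 ≤ q - 1 := by linarith
  have hq : 1 ≤ ENNReal.ofReal q := by simpa using hq1
  have hSint : Integrable S μ := hS.integrable hq
  have hYint : Integrable Y μ := hY.integrable hq
  have hSp : Integrable (fun ω => S ω ^ (q - 1)) μ :=
    (hS.mono_exponent (by gcongr; linarith)).integrable_rpow_of_nonneg_s9 hS0 hp
  have hSpY : IndepFun (fun ω => S ω ^ (q - 1)) Y μ :=
    hSY.comp (Real.continuous_rpow_const hp).measurable measurable_id
  have hprod : Integrable (fun ω => q * (S ω ^ (q - 1) * Y ω)) μ :=
    (hSpY.integrable_mul hSp hYint).const_mul q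
  have hSq := hS.integrable_rpow_of_nonneg_s9 hS0 (by linarith)
  have hYq := hY.integrable_rpow_of_nonneg_s9 hY0 (by linarith)
  calc ∫ ω, (S ω + Y ω) ^ q ∂μ
      ≤ ∫ ω, (S ω ^ q + q * (S ω ^ (q - 1) * Y ω) + Y ω ^ q) ∂μ := by
        refine integral_mono ((hS.add hY).integrable_rpow_of_nonneg_s9
          (fun ω => add_nonneg (hS0 ω) (hY0 ω)) (by linarith)) ((hSq.add hprod).add hYq) fun ω => ?_
        simpa only [mul_assoc] using
          Real.add_rpow_le_add_mul_rpow_sub_one_add_rpow (hS0 ω) (hY0 ω) hq1 hq2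
    _ = ∫ ω, S ω ^ q ∂μ + q * ((∫ ω, S ω ^ (q - 1) ∂μ) * ∫ ω, Y ω ∂μ) + ∫ ω, Y ω ^ q ∂μ := by
        rw [integral_add ?_ hYq, integral_add hSq hprod, integral_const_mul,
          hSpY.integral_fun_mul_eq_mul_integral hSp.aestronglyMeasurable hYint.aestronglyMeasurable]
        exact hSq.add hprod
    _ ≤ ∫ ω, S ω ^ q ∂μ + q * (∫ ω, S ω ∂μ) ^ (q - 1) * ∫ ω, Y ω ∂μ + ∫ ω, Y ω ^ q ∂μ := by
        rw [← mul_assoc]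
        gcongr
        · exact integral_nonneg hY0
        · exact integral_rpow_le_rpow_integral hSint hS0 hp (by linarith)

theorem integral_sum_rpow_le_of_iIndepFun {ι : Type*} {X : ι → Ω → ℝ} (hX0 : ∀ i ω, 0 ≤ X i ω)
    (hX : ∀ i, MemLp (X i) (ENNReal.ofReal q) μ) (hindep : iIndepFun X μ) (hq1 : 1 ≤ q)
    (hq2 : q ≤ 2) (s : Finset ι) :
    ∫ ω, (∑ i ∈ s, X i ω) ^ q ∂μ ≤
      (∑ i ∈ s, ∫ ω, X i ω ∂μ) ^ q + ∑ i ∈ s, ∫ ω, X i ω ^ q ∂μ := by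
  classical
  induction s using Finset.induction_on with
  | empty => simp [Real.zero_rpow (by linarith : q ≠ 0)]
  | insert a s ha ih =>
    have hS0 : ∀ ω, 0 ≤ ∑ i ∈ s, X i ω := fun ω => Finset.sum_nonneg fun i _ => hX0 i ω
    have hS : MemLp (fun ω => ∑ i ∈ s, X i ω) (ENNReal.ofReal q) μ :=
      memLp_finsetSum s fun i _ => hX i
    have hSX : IndepFun (fun ω => ∑ i ∈ s, X i ω) (X a) μ := by
      simpa only [← Finset.sum_fn] using
        hindep.indepFun_finsetSum_of_notMem₀ (fun i => (hX i).aemeasurable) ha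
    have hES : ∫ ω, ∑ i ∈ s, X i ω ∂μ = ∑ i ∈ s, ∫ ω, X i ω ∂μ :=
      integral_finsetSum s fun i _ => (hX i).integrable (by simpa using hq1)
    have hconvex := Real.add_mul_rpow_sub_one_le_add_rpow (a := ∑ i ∈ s, ∫ ω, X i ω ∂μ)
      (b := ∫ ω, X a ω ∂μ) (Finset.sum_nonneg fun i _ => integral_nonneg (hX0 i))
      (integral_nonneg (hX0 a)) hq1
    have hstep := integral_add_rpow_le_of_indepFun hS0 (hX0 a) hS (hX a) hSX hq1 hq2
    simp only [Finset.sum_insert ha, hES] at hstep ⊢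
    simp only [add_comm (X a _), add_comm (∫ ω, X a ω ∂μ)]
    linarith

end Neveu

theorem neveu_corollary {Ω : Type*} [MeasurableSpace Ω] (μ : Measure Ω)
    [IsProbabilityMeasure μ] (q : ℝ) (hq1 : 1 < q) (hq2 : q ≤ 2)
    (n : ℕ) (X : Fin n → Ω → ℝ) (hXm : ∀ i, Measurable (X i))
    (hX0 : ∀ i ω, 0 ≤ X i ω)
    (hXq : ∀ i, Integrable (fun ω => X i ω ^ q) μ)
    (hindep : iIndepFun X μ) :
    ∫ ω, (∑ i, X i ω) ^ q ∂μ ≤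
      (∑ i, ∫ ω, X i ω ∂μ) ^ q + ∑ i, ∫ ω, X i ω ^ q ∂μ :=
  integral_sum_rpow_le_of_iIndepFun hX0
    (fun i => memLp_ofReal_of_integrable_rpow (hXm i).aestronglyMeasurable (hX0 i)
      (by linarith) (hXq i)) hindep hq1.le hq2 Finset.univ
end

section
/- Random-index Lq bound: let q > 1, θ_q = max(1, q/2), A_q = 2⌈q/2⌉^{1/2}. Let X be a nonnegative random variable and N an ℕ-valued random variable, both with finite q-th moment, and let (Xᵢ) be i.i.d. copies of X independent of N. Assuming the Marcinkiewicz–Zygmund-type inequality E[|Σᵢ₌₁ⁿ Yᵢ|^q] ≤ A_q^q n^{θ_q - 1} Σᵢ E[|Yᵢ|^q] for centered independent (Yᵢ), one has ‖Σᵢ₌₁^N Xᵢ‖_q ≤ A_q ‖N‖_{θ_q}^{θ_q/q} ‖X − E[X]‖_q + ‖N‖_q E[X]. -/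
open MeasureTheory ProbabilityTheory

lemma rib_rpow_add_le {q : ℝ} (hq : 0 ≤ q) (a b : ℝ) :
    |a + b| ^ q ≤ 2 ^ q * (|a| ^ q + |b| ^ q) := by
  have h1 : |a + b| ≤ 2 * max |a| |b| := by
    refine (abs_add_le a b).trans ?_
    rw [two_mul]
    exact add_le_add (le_max_left _ _) (le_max_right _ _)
  have h2 : |a + b| ^ q ≤ (2 * max |a| |b|) ^ q :=
    Real.rpow_le_rpow (abs_nonneg _) h1 hq
  rw [Real.mul_rpow (by norm_num) (le_max_of_le_left (abs_nonneg a))] at h2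
  refine h2.trans (mul_le_mul_of_nonneg_left ?_ (Real.rpow_nonneg (by norm_num) q))
  rcases max_cases |a| |b| with ⟨h, _⟩ | ⟨h, _⟩ <;> rw [h]
  · nlinarith [Real.rpow_nonneg (abs_nonneg b) q]
  · nlinarith [Real.rpow_nonneg (abs_nonneg a) q]

lemma rib_integrable_add {Ω : Type*} [MeasurableSpace Ω] {μ : Measure Ω} {q : ℝ} (hq : 0 ≤ q)
    {f g : Ω → ℝ} (hf : Measurable f) (hg : Measurable g)
    (hfi : Integrable (fun ω => |f ω| ^ q) μ) (hgi : Integrable (fun ω => |g ω| ^ q) μ) :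
    Integrable (fun ω => |f ω + g ω| ^ q) μ := by
  refine Integrable.mono' ((hfi.add hgi).const_mul (2 ^ q))
    (((Real.continuous_rpow_const hq).measurable.comp (hf.add hg).abs).aestronglyMeasurable) ?_
  filter_upwards with ω
  rw [Real.norm_eq_abs, abs_of_nonneg (Real.rpow_nonneg (abs_nonneg _) _)]
  exact rib_rpow_add_le hq _ _

lemma rib_integrable_sum {Ω : Type*} [MeasurableSpace Ω] {μ : Measure Ω} [IsProbabilityMeasure μ]
    {q : ℝ} (hq : 0 < q) (Y : ℕ → Ω → ℝ) (hm : ∀ i, Measurable (Y i))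
    (hI : ∀ i, Integrable (fun ω => |Y i ω| ^ q) μ) (n : ℕ) :
    Integrable (fun ω => |∑ i ∈ Finset.range n, Y i ω| ^ q) μ := by
  induction n with
  | zero => simp [Real.zero_rpow hq.ne']
  | succ n ih =>
      simp_rw [Finset.sum_range_succ]
      exact rib_integrable_add hq.le (Finset.measurable_sum _ fun i _ => hm i) (hm n) ih (hI n)

theorem random_index_Lq_bound {Ω : Type*} [MeasurableSpace Ω] (μ : Measure Ω)
    [IsProbabilityMeasure μ] (q θq Aq : ℝ) (hq : 1 < q)
    (hθ : θq = max 1 (q / 2)) (hA : Aq = 2 * (⌈q / 2⌉₊ : ℝ) ^ ((1:ℝ)/2))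
    (X : Ω → ℝ) (hXm : Measurable X) (hX0 : ∀ ω, 0 ≤ X ω)
    (hXq : Integrable (fun ω => X ω ^ q) μ)
    (N : Ω → ℕ) (hNm : Measurable N)
    (hNq : Integrable (fun ω => (N ω : ℝ) ^ q) μ)
    (Xs : ℕ → Ω → ℝ) (hXsm : ∀ i, Measurable (Xs i))
    (hid : ∀ i, IdentDistrib (Xs i) X μ μ)
    (hiid : iIndepFun Xs μ)
    (hindepN : IndepFun (fun ω i => Xs i ω : Ω → ℕ → ℝ) N μ)
    (hMZ : ∀ (n : ℕ) (Y : ℕ → Ω → ℝ), (∀ i, Measurable (Y i)) →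
      (∀ i, Integrable (fun ω => |Y i ω| ^ q) μ) →
      (∀ i, ∫ ω, Y i ω ∂μ = 0) →
      iIndepFun Y μ →
      ∫ ω, |∑ i ∈ Finset.range n, Y i ω| ^ q ∂μ ≤
        Aq ^ q * (n : ℝ) ^ (θq - 1) * ∑ i ∈ Finset.range n, ∫ ω, |Y i ω| ^ q ∂μ) :
    (∫ ω, |∑ i ∈ Finset.range (N ω), Xs i ω| ^ q ∂μ) ^ (1/q) ≤
      Aq * ((∫ ω, (N ω : ℝ) ^ θq ∂μ) ^ (1/θq)) ^ (θq / q) *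
        (∫ ω, |X ω - ∫ ω', X ω' ∂μ| ^ q ∂μ) ^ (1/q) +
      (∫ ω, (N ω : ℝ) ^ q ∂μ) ^ (1/q) * ∫ ω, X ω ∂μ := by
  have hq0 : (0:ℝ) < q := lt_trans one_pos hq
  have hqne : q ≠ 0 := hq0.ne'
  have hq0' : (0:ℝ) ≤ q := hq0.le
  have hθ1 : (1:ℝ) ≤ θq := hθ ▸ le_max_left 1 _
  have hθ0 : (0:ℝ) < θq := lt_of_lt_of_le one_pos hθ1
  have hθle : θq ≤ q := by rw [hθ]; exact max_le hq.le (by linarith)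
  have hAq0 : 0 ≤ Aq := by rw [hA]; positivity
  -- integrability of X
  have hXint : Integrable X μ := by
    refine Integrable.mono' ((integrable_const 1).add hXq) hXm.aestronglyMeasurable ?_
    filter_upwards with ω
    rw [Real.norm_eq_abs, abs_of_nonneg (hX0 ω)]
    have h0 : 0 ≤ X ω ^ q := Real.rpow_nonneg (hX0 ω) q
    rcases le_total 1 (X ω) with h | h
    · have h2 := Real.rpow_le_rpow_of_exponent_le h hq.le
      rw [Real.rpow_one] at h2
      simp only [Pi.add_apply]; linarith
    · simp only [Pi.add_apply]; linarith
  set m := ∫ ω, X ω ∂μ with hm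
  have hm0 : 0 ≤ m := integral_nonneg hX0
  set C := ∫ ω, |X ω - m| ^ q ∂μ with hCdef
  have hC0 : 0 ≤ C := integral_nonneg fun ω => Real.rpow_nonneg (abs_nonneg _) _
  have hXq' : Integrable (fun ω => |X ω| ^ q) μ :=
    hXq.congr (Filter.Eventually.of_forall fun ω => by simp [abs_of_nonneg (hX0 ω)])
  have hCint : Integrable (fun ω => |X ω - m| ^ q) μ := by
    have := rib_integrable_add (μ := μ) hq0' hXm (measurable_const (a := -m))
      hXq' (integrable_const (|(-m)| ^ q))
    simpa only [← sub_eq_add_neg] using this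
  -- centered variables
  have hXsint : ∀ i, Integrable (Xs i) μ := fun i => (hid i).integrable_iff.mpr hXint
  set D : ℕ → Ω → ℝ := fun i ω => Xs i ω - m with hD
  have hDm : ∀ i, Measurable (D i) := fun i => (hXsm i).sub measurable_const
  have habs_meas : Measurable fun x : ℝ => |x| ^ q :=
    (Real.continuous_rpow_const hq0').measurable.comp measurable_abs
  have hDid : ∀ i, IdentDistrib (fun ω => |D i ω| ^ q) (fun ω => |X ω - m| ^ q) μ μ :=
    fun i => ((hid i).comp (measurable_id.sub measurable_const)).comp habs_meas
  have hDq : ∀ i, Integrable (fun ω => |D i ω| ^ q) μ := fun i => (hDid i).integrable_iff.mpr hCint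
  have hDCeq : ∀ i, ∫ ω, |D i ω| ^ q ∂μ = C := fun i => (hDid i).integral_eq
  have hDmean : ∀ i, ∫ ω, D i ω ∂μ = 0 := fun i => by
    rw [hD]
    simp [integral_sub (hXsint i) (integrable_const m), (hid i).integral_eq]
    exact sub_eq_zero.mpr hm.symm
  have hDiid : iIndepFun D μ :=
    hiid.comp (fun _ => fun x => x - m) (fun _ => measurable_id.sub measurable_const)
  have hDsum_int : ∀ n, Integrable (fun ω => |∑ i ∈ Finset.range n, D i ω| ^ q) μ :=
    fun n => rib_integrable_sum hq0 D hDm hDq n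
  -- MZ per n, cleaned-up form
  have hMZ' : ∀ n : ℕ, ∫ ω, |∑ i ∈ Finset.range n, D i ω| ^ q ∂μ ≤ Aq ^ q * C * (n:ℝ) ^ θq := by
    intro n
    have h := hMZ n D hDm hDq hDmean hDiid
    have hsum : ∑ i ∈ Finset.range n, ∫ ω, |D i ω| ^ q ∂μ = (n:ℝ) * C := by
      simp [hDCeq, Finset.sum_const, nsmul_eq_mul]
    rw [hsum] at h
    refine h.trans (le_of_eq ?_)
    rcases Nat.eq_zero_or_pos n with hn | hn
    · subst hn; simp [Real.zero_rpow hθ0.ne']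
    · have hnp : (0:ℝ) < (n:ℝ) := by exact_mod_cast hn
      have h2 : (n:ℝ) ^ (θq - 1) * (n:ℝ) ^ (1:ℝ) = (n:ℝ) ^ θq := by
        rw [← Real.rpow_add hnp]; ring_nf
      rw [Real.rpow_one] at h2
      rw [← h2]; ring
  -- measurability of the random sum
  have hNr : Measurable fun ω => (N ω : ℝ) := (measurable_of_countable _).comp hNm
  have hVm : Measurable (fun ω i => Xs i ω : Ω → ℕ → ℝ) :=
    measurable_pi_lambda _ fun i => hXsm i
  have hSm : Measurable (fun ω => ∑ i ∈ Finset.range (N ω), Xs i ω) := by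
    have hφ : Measurable (fun p : (ℕ → ℝ) × ℕ => ∑ i ∈ Finset.range p.2, p.1 i) :=
      measurable_from_prod_countable_left fun n =>
        Finset.measurable_sum (Finset.range n) fun i _ => measurable_pi_apply i
    exact hφ.comp (hVm.prodMk hNm)
  set S := fun ω => ∑ i ∈ Finset.range (N ω), Xs i ω with hS
  set T := fun ω => S ω - (N ω : ℝ) * m with hT
  have hTm : Measurable T := hSm.sub (hNr.mul measurable_const)
  -- partition of Ω by values of N
  have hmeasSets : ∀ n : ℕ, MeasurableSet (N ⁻¹' {n}) := fun n => hNm (measurableSet_singleton n)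
  have hUnion : (⋃ n : ℕ, N ⁻¹' {n}) = Set.univ := by
    ext ω; simp
  have hdisj : Pairwise (Function.onFun Disjoint fun n => N ⁻¹' {n}) := by
    intro a b hab
    simp only [Function.onFun, Set.disjoint_left]
    rintro ω ha hb
    exact hab (by simp only [Set.mem_preimage, Set.mem_singleton_iff] at ha hb; rw [← ha, ← hb])
  -- the key lintegral computation for T
  set f : ℕ → ℝ := fun n => ∫ ω, |∑ i ∈ Finset.range n, D i ω| ^ q ∂μ with hf
  have hpart : ∫⁻ ω, ENNReal.ofReal |T ω| ^ q ∂μ =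
      ∑' n : ℕ, ENNReal.ofReal (f n) * μ (N ⁻¹' {n}) := by
    set u : ℕ → (ℕ → ℝ) → ENNReal :=
      fun n v => ENNReal.ofReal (|∑ i ∈ Finset.range n, (v i - m)| ^ q) with hu
    have hu_meas : ∀ n, Measurable (u n) := fun n =>
      ENNReal.measurable_ofReal.comp (habs_meas.comp
        (Finset.measurable_sum (Finset.range n) fun i _ =>
          (measurable_pi_apply i).sub measurable_const))
    have huV_meas : ∀ n, Measurable fun ω => u n (fun i => Xs i ω) :=
      fun n => (hu_meas n).comp hVm
    calc ∫⁻ ω, ENNReal.ofReal |T ω| ^ q ∂μ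
        = ∫⁻ ω in Set.univ, ENNReal.ofReal |T ω| ^ q ∂μ := (setLIntegral_univ _).symm
      _ = ∫⁻ ω in ⋃ n : ℕ, N ⁻¹' {n}, ENNReal.ofReal |T ω| ^ q ∂μ := by rw [hUnion]
      _ = ∑' n : ℕ, ∫⁻ ω in N ⁻¹' {n}, ENNReal.ofReal |T ω| ^ q ∂μ :=
          lintegral_iUnion hmeasSets hdisj _
      _ = ∑' n : ℕ, ENNReal.ofReal (f n) * μ (N ⁻¹' {n}) := by
          refine tsum_congr fun n => ?_
          have h1 : ∫⁻ ω in N ⁻¹' {n}, ENNReal.ofReal |T ω| ^ q ∂μ =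
              ∫⁻ ω in N ⁻¹' {n}, u n (fun i => Xs i ω) ∂μ := by
            refine setLIntegral_congr_fun (hmeasSets n) (fun ω hω => ?_)
            have hNn : N ω = n := hω
            have hTω : T ω = ∑ i ∈ Finset.range n, (Xs i ω - m) := by
              simp only [hT, hS, hNn, Finset.sum_sub_distrib, Finset.sum_const,
                Finset.card_range, nsmul_eq_mul]
            rw [hTω, ENNReal.ofReal_rpow_of_nonneg (abs_nonneg _) hq0']
          have hindi : (fun ω => Set.indicator {n} (fun _ => (1:ENNReal)) (N ω)) =
              (N ⁻¹' {n}).indicator fun _ => (1:ENNReal) := by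
            funext ω
            by_cases h : N ω = n
            · simp [Set.indicator_apply, h]
            · simp [Set.indicator_apply, h]
          have h2 : ∫⁻ ω in N ⁻¹' {n}, u n (fun i => Xs i ω) ∂μ =
              ∫⁻ ω, u n (fun i => Xs i ω) *
                Set.indicator {n} (fun _ => (1:ENNReal)) (N ω) ∂μ := by
            rw [← lintegral_indicator (hmeasSets n)]
            congr 1
            funext ω
            by_cases h : N ω = n
            · simp [Set.indicator_apply, h]
            · simp [Set.indicator_apply, h]
          have hm2 : Measurable fun ω => Set.indicator {n} (fun _ => (1:ENNReal)) (N ω) := by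
            rw [hindi]
            exact measurable_const.indicator (hmeasSets n)
          have hind : IndepFun (fun ω => u n (fun i => Xs i ω))
              (fun ω => Set.indicator {n} (fun _ => (1:ENNReal)) (N ω)) μ := by
            have := hindepN.comp (φ := u n)
              (ψ := Set.indicator {n} fun _ => (1:ENNReal)) (hu_meas n)
              (measurable_of_countable _)
            exact this
          have h3 : ∫⁻ ω, u n (fun i => Xs i ω) *
                Set.indicator {n} (fun _ => (1:ENNReal)) (N ω) ∂μ =
              (∫⁻ ω, u n (fun i => Xs i ω) ∂μ) *
                ∫⁻ ω, Set.indicator {n} (fun _ => (1:ENNReal)) (N ω) ∂μ :=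
            lintegral_mul_eq_lintegral_mul_lintegral_of_indepFun''
              (huV_meas n).aemeasurable hm2.aemeasurable hind
          have h4 : ∫⁻ ω, Set.indicator {n} (fun _ => (1:ENNReal)) (N ω) ∂μ =
              μ (N ⁻¹' {n}) := by
            rw [hindi]
            exact lintegral_indicator_one (hmeasSets n)
          have h5 : ∫⁻ ω, u n (fun i => Xs i ω) ∂μ = ENNReal.ofReal (f n) := by
            rw [hf]
            exact (ofReal_integral_eq_lintegral_ofReal (hDsum_int n)
              (ae_of_all _ fun ω => Real.rpow_nonneg (abs_nonneg _) _)).symm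
          rw [h1, h2, h3, h4, h5]
  -- integrability of N ^ θq
  have hNr' : Measurable fun ω => (N ω : ℝ) ^ θq :=
    (Real.continuous_rpow_const hθ0.le).measurable.comp hNr
  have hNθint : Integrable (fun ω => (N ω : ℝ) ^ θq) μ := by
    refine Integrable.mono' ((integrable_const 1).add hNq) hNr'.aestronglyMeasurable ?_
    filter_upwards with ω
    rw [Real.norm_eq_abs, abs_of_nonneg (Real.rpow_nonneg (Nat.cast_nonneg _) _)]
    have h0 : (0:ℝ) ≤ (N ω : ℝ) ^ q := Real.rpow_nonneg (Nat.cast_nonneg _) _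
    rcases Nat.eq_zero_or_pos (N ω) with h | h
    · simp only [Pi.add_apply, h]
      push_cast
      rw [Real.zero_rpow hθ0.ne']
      rw [h] at h0; push_cast at h0
      linarith
    · have h1 : (1:ℝ) ≤ (N ω : ℝ) := by exact_mod_cast h
      have h2 := Real.rpow_le_rpow_of_exponent_le h1 hθle
      simp only [Pi.add_apply]; linarith
  set Eθ := ∫ ω, (N ω : ℝ) ^ θq ∂μ with hEθ
  have hEθ0 : 0 ≤ Eθ := integral_nonneg fun ω => Real.rpow_nonneg (Nat.cast_nonneg _) _
  have hNθsum : ∑' n : ℕ, ENNReal.ofReal ((n:ℝ) ^ θq) * μ (N ⁻¹' {n}) =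
      ENNReal.ofReal Eθ := by
    have h2 := ofReal_integral_eq_lintegral_ofReal hNθint
      (ae_of_all _ fun ω => Real.rpow_nonneg (Nat.cast_nonneg _) _)
    have h3 : ∫⁻ ω, ENNReal.ofReal ((N ω : ℝ) ^ θq) ∂μ =
        ∑' n : ℕ, ENNReal.ofReal ((n:ℝ) ^ θq) * μ (N ⁻¹' {n}) := by
      rw [← lintegral_map (measurable_of_countable fun n : ℕ => ENNReal.ofReal ((n:ℝ) ^ θq)) hNm,
        lintegral_countable']
      exact tsum_congr fun n => by rw [Measure.map_apply hNm (measurableSet_singleton n)]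
    rw [h3] at h2
    exact h2.symm
  have hTbound : ∫⁻ ω, ENNReal.ofReal |T ω| ^ q ∂μ ≤
      ENNReal.ofReal (Aq ^ q * C) * ENNReal.ofReal Eθ := by
    rw [hpart, ← hNθsum, ← ENNReal.tsum_mul_left]
    refine ENNReal.tsum_le_tsum fun n => ?_
    rw [← mul_assoc, ← ENNReal.ofReal_mul (by positivity)]
    exact mul_le_mul_left (ENNReal.ofReal_le_ofReal (hMZ' n)) _
  -- the second (deterministic) term
  set Eq2 := ∫ ω, (N ω : ℝ) ^ q ∂μ with hEq2
  have hEq20 : 0 ≤ Eq2 := integral_nonneg fun ω => Real.rpow_nonneg (Nat.cast_nonneg _) _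
  have hGcalc : ∫⁻ ω, ENNReal.ofReal ((N ω : ℝ) * m) ^ q ∂μ =
      ENNReal.ofReal (Eq2 * m ^ q) := by
    have hint : Integrable (fun ω => (N ω : ℝ) ^ q * m ^ q) μ := hNq.mul_const _
    have h1 : ∀ ω, ENNReal.ofReal ((N ω : ℝ) * m) ^ q =
        ENNReal.ofReal ((N ω : ℝ) ^ q * m ^ q) := fun ω => by
      rw [ENNReal.ofReal_rpow_of_nonneg (mul_nonneg (Nat.cast_nonneg _) hm0) hq0',
        Real.mul_rpow (Nat.cast_nonneg _) hm0]
    simp_rw [h1]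
    rw [← ofReal_integral_eq_lintegral_ofReal hint (ae_of_all _ fun ω =>
      mul_nonneg (Real.rpow_nonneg (Nat.cast_nonneg _) _) (Real.rpow_nonneg hm0 _))]
    rw [integral_mul_const]
  -- Minkowski
  set F := fun ω => ENNReal.ofReal |T ω| with hF
  set G := fun ω => ENNReal.ofReal ((N ω : ℝ) * m) with hG
  have hFme : AEMeasurable F μ := (ENNReal.measurable_ofReal.comp hTm.abs).aemeasurable
  have hGme : AEMeasurable G μ :=
    (ENNReal.measurable_ofReal.comp (hNr.mul measurable_const)).aemeasurable
  have hSle : ∀ ω, ENNReal.ofReal |S ω| ≤ F ω + G ω := fun ω => by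
    have hST : S ω = T ω + (N ω : ℝ) * m := by rw [hT]; ring
    have h1 : |S ω| ≤ |T ω| + (N ω : ℝ) * m := by
      rw [hST]
      refine (abs_add_le _ _).trans ?_
      rw [abs_of_nonneg (mul_nonneg (Nat.cast_nonneg _) hm0)]
    calc ENNReal.ofReal |S ω| ≤ ENNReal.ofReal (|T ω| + (N ω : ℝ) * m) :=
          ENNReal.ofReal_le_ofReal h1
      _ = F ω + G ω := ENNReal.ofReal_add (abs_nonneg _) (mul_nonneg (Nat.cast_nonneg _) hm0)
  set K := ∫⁻ ω, ENNReal.ofReal |S ω| ^ q ∂μ with hK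
  set R1 := (ENNReal.ofReal (Aq ^ q * C) * ENNReal.ofReal Eθ) ^ (1/q) with hR1
  set R2 := ENNReal.ofReal (Eq2 * m ^ q) ^ (1/q) with hR2
  have hmain : K ^ (1/q) ≤ R1 + R2 := by
    have hstep1 : K ≤ ∫⁻ ω, (F ω + G ω) ^ q ∂μ :=
      lintegral_mono fun ω => ENNReal.rpow_le_rpow (hSle ω) hq0'
    have hstep2 : (∫⁻ ω, (F ω + G ω) ^ q ∂μ) ^ (1/q) ≤
        (∫⁻ ω, F ω ^ q ∂μ) ^ (1/q) + (∫⁻ ω, G ω ^ q ∂μ) ^ (1/q) := by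
      have := ENNReal.lintegral_Lp_add_le hFme hGme hq.le
      simpa using this
    calc K ^ (1/q) ≤ (∫⁻ ω, (F ω + G ω) ^ q ∂μ) ^ (1/q) :=
          ENNReal.rpow_le_rpow hstep1 (by positivity)
      _ ≤ (∫⁻ ω, F ω ^ q ∂μ) ^ (1/q) + (∫⁻ ω, G ω ^ q ∂μ) ^ (1/q) := hstep2
      _ ≤ R1 + R2 := by
          refine add_le_add (ENNReal.rpow_le_rpow ?_ (by positivity)) (le_of_eq ?_)
          · exact hTbound
          · rw [hR2, hGcalc]
  -- finiteness
  have hR1ne : R1 ≠ ⊤ := by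
    rw [hR1]
    exact (ENNReal.rpow_lt_top_of_nonneg (by positivity)
      (ENNReal.mul_ne_top ENNReal.ofReal_ne_top ENNReal.ofReal_ne_top)).ne
  have hR2ne : R2 ≠ ⊤ := by
    rw [hR2]
    exact (ENNReal.rpow_lt_top_of_nonneg (by positivity) ENNReal.ofReal_ne_top).ne
  have hRne : R1 + R2 ≠ ⊤ := ENNReal.add_ne_top.mpr ⟨hR1ne, hR2ne⟩
  have hKne : K ≠ ⊤ := by
    intro h
    have htop : K ^ (1/q) = (⊤ : ENNReal) := by
      rw [h]; exact ENNReal.top_rpow_of_pos (by positivity)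
    rw [htop] at hmain
    exact hRne (top_le_iff.mp hmain)
  have hSabs_nonneg : ∀ ω, (0:ℝ) ≤ |S ω| ^ q := fun ω => Real.rpow_nonneg (abs_nonneg _) _
  have hKeq2 : ∫⁻ ω, ENNReal.ofReal (|S ω| ^ q) ∂μ = K := by
    rw [hK]
    exact lintegral_congr fun ω => (ENNReal.ofReal_rpow_of_nonneg (abs_nonneg _) hq0').symm
  have hSint : Integrable (fun ω => |S ω| ^ q) μ := by
    refine ⟨(habs_meas.comp hSm).aestronglyMeasurable, ?_⟩
    rw [hasFiniteIntegral_iff_ofReal (ae_of_all _ hSabs_nonneg), hKeq2]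
    exact hKne.lt_top
  have hKval : ∫ ω, |S ω| ^ q ∂μ = K.toReal := by
    rw [← hKeq2, ← ofReal_integral_eq_lintegral_ofReal hSint (ae_of_all _ hSabs_nonneg),
      ENNReal.toReal_ofReal (integral_nonneg hSabs_nonneg)]
  -- toReal values of the two terms
  have hR1val : R1.toReal = Aq * (Eθ ^ (1/θq)) ^ (θq/q) * C ^ (1/q) := by
    rw [hR1, ← ENNReal.ofReal_mul (by positivity), ← ENNReal.toReal_rpow,
      ENNReal.toReal_ofReal (by positivity)]
    have e1 : (Aq ^ q * C * Eθ) ^ (1/q) = (Aq ^ q) ^ (1/q) * C ^ (1/q) * Eθ ^ (1/q) := by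
      rw [Real.mul_rpow (by positivity) hEθ0, Real.mul_rpow (by positivity) hC0]
    have e2 : (Aq ^ q) ^ ((1:ℝ)/q) = Aq := by
      rw [← Real.rpow_mul hAq0, mul_one_div_cancel hqne, Real.rpow_one]
    have e3 : Eθ ^ ((1:ℝ)/q) = (Eθ ^ (1/θq)) ^ (θq/q) := by
      rw [← Real.rpow_mul hEθ0]
      congr 1
      field_simp
    rw [e1, e2, e3]; ring
  have hR2val : R2.toReal = Eq2 ^ (1/q) * m := by
    rw [hR2, ← ENNReal.toReal_rpow, ENNReal.toReal_ofReal (by positivity),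
      Real.mul_rpow hEq20 (Real.rpow_nonneg hm0 _), ← Real.rpow_mul hm0,
      mul_one_div_cancel hqne, Real.rpow_one]
  -- finish
  have hfinal := ENNReal.toReal_mono hRne hmain
  rw [ENNReal.toReal_add hR1ne hR2ne, hR1val, hR2val, ← ENNReal.toReal_rpow, ← hKval] at hfinal
  exact hfinal
end

section
/- Discrete Gronwall-type decay for concave recursions: let h : (0,1] → (0,1) be increasing with x ↦ x(1−h(x)) increasing, and suppose h(x) = c·x^{α−1} for some c > 0 and α > 1. Let (u_k) satisfy u_0 = 1 and u_{k+1} ≤ u_k(1 − ½h(u_k)) for all k < K. Then there is a constant c'' > 0 (depending only on c and α) such that h(u_k) ≤ c''/k for all 1 ≤ k ≤ K. -/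
/-!
With `β = α - 1` the potential `v k = u k ^ (-β)` turns `h (u k)` into `c / v k`. Since
`(1 - t) ^ (-β) ≥ 1 + β t`, each step of the recursion raises `v` by at least `β c / 2`, so
`v k ≥ k β c / 2` and hence `h (u k) ≤ 2 / (β k)`.
-/

open Real

theorem one_add_mul_le_one_sub_rpow_neg {t β : ℝ} (ht : t < 1) (hβ : 0 ≤ β) :
    1 + β * t ≤ (1 - t) ^ (-β) := by
  have hpos : 0 < 1 - t := sub_pos.mpr ht
  calc 1 + β * t ≤ log (1 - t) * -β + 1 := by nlinarith [log_le_sub_one_of_pos hpos]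
    _ ≤ exp (log (1 - t) * -β) := add_one_le_exp _
    _ = (1 - t) ^ (-β) := (rpow_def_of_pos hpos _).symm

theorem rpow_neg_add_le_of_le_mul_one_sub_mul_rpow {x y a β : ℝ} (hy : 0 < y) (hβ : 0 ≤ β)
    (ha : a * x ^ β < 1) (hxy : y ≤ x * (1 - a * x ^ β)) :
    x ^ (-β) + β * a ≤ y ^ (-β) := by
  have hsub : 0 < 1 - a * x ^ β := sub_pos.mpr ha
  have hx : 0 < x := pos_of_mul_pos_left (hy.trans_le hxy) hsub.le
  have hinv : x ^ (-β) * x ^ β = 1 := by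
    rw [rpow_neg hx.le, inv_mul_cancel₀ (rpow_pos_of_pos hx β).ne']
  calc x ^ (-β) + β * a = x ^ (-β) * (1 + β * (a * x ^ β)) := by
        linear_combination (-(β * a)) * hinv
    _ ≤ x ^ (-β) * (1 - a * x ^ β) ^ (-β) :=
        mul_le_mul_of_nonneg_left (one_add_mul_le_one_sub_rpow_neg ha hβ) (rpow_nonneg hx.le _)
    _ = (x * (1 - a * x ^ β)) ^ (-β) := (mul_rpow hx.le hsub.le).symm
    _ ≤ y ^ (-β) := rpow_le_rpow_of_nonpos hy hxy (neg_nonpos.mpr hβ)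

theorem add_nsmul_le_of_forall_add_le_succ {M : Type*} [AddCommMonoid M] [PartialOrder M]
    [IsOrderedAddMonoid M] {v : ℕ → M} {d : M} {K : ℕ} (hstep : ∀ k < K, v k + d ≤ v (k + 1)) :
    ∀ k ≤ K, v 0 + k • d ≤ v k := by
  intro k
  induction k with
  | zero => simp
  | succ k ih =>
    intro hk
    calc v 0 + (k + 1) • d = (v 0 + k • d) + d := by rw [succ_nsmul, add_assoc]
      _ ≤ v k + d := add_le_add_left (ih (by omega)) d
      _ ≤ v (k + 1) := hstep k hk

theorem discrete_gronwall_decay_general (c α : ℝ) (hα : 1 < α) :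
    ∃ c'' : ℝ, 0 < c'' ∧
      ∀ (h : ℝ → ℝ), (∀ x, h x = c * x ^ (α - 1)) →
      (∀ x ∈ Set.Ioc (0:ℝ) 1, h x ∈ Set.Ioo (0:ℝ) 1) →
      StrictMonoOn h (Set.Ioc (0:ℝ) 1) →
      StrictMonoOn (fun x => x * (1 - h x)) (Set.Ioc (0:ℝ) 1) →
      ∀ (K : ℕ) (u : ℕ → ℝ), u 0 = 1 →
      (∀ k, k ≤ K → u k ∈ Set.Ioc (0:ℝ) 1) →
      (∀ k, k < K → u (k + 1) ≤ u k * (1 - h (u k) / 2)) →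
      ∀ k, 1 ≤ k → k ≤ K → h (u k) ≤ c'' / k := by
  have hβ : 0 < α - 1 := sub_pos.mpr hα
  refine ⟨2 / (α - 1), by positivity, ?_⟩
  intro h hh hh_mem _ _ K u _ hu hrec k hk1 hkK
  have hstep : ∀ j < K, u j ^ (-(α - 1)) + (α - 1) * (c / 2) ≤ u (j + 1) ^ (-(α - 1)) := by
    intro j hj
    have hj_lt := (hh_mem _ (hu j hj.le)).2
    have hj_rec := hrec j hj
    rw [hh] at hj_lt hj_rec
    refine rpow_neg_add_le_of_le_mul_one_sub_mul_rpow (hu _ hj).1 hβ.le (by linarith) ?_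
    linarith
  have hgrowth := add_nsmul_le_of_forall_add_le_succ hstep k hkK
  rw [nsmul_eq_mul] at hgrowth
  have hk : (0 : ℝ) < k := by exact_mod_cast hk1
  have huk := (hu k hkK).1
  have hbound : k * ((α - 1) * (c / 2)) * u k ^ (α - 1) ≤ 1 := by
    have hu0 : 0 ≤ u 0 ^ (-(α - 1)) := rpow_nonneg (hu 0 (Nat.zero_le K)).1.le _
    calc k * ((α - 1) * (c / 2)) * u k ^ (α - 1)
        ≤ (u 0 ^ (-(α - 1)) + k * ((α - 1) * (c / 2))) * u k ^ (α - 1) := by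
          gcongr
          linarith
      _ ≤ u k ^ (-(α - 1)) * u k ^ (α - 1) := by gcongr
      _ = 1 := by rw [rpow_neg huk.le, inv_mul_cancel₀ (rpow_pos_of_pos huk _).ne']
  rw [hh, le_div_iff₀ hk, le_div_iff₀ hβ]
  linarith

theorem discrete_gronwall_decay (c α : ℝ) (hc : 0 < c) (hα : 1 < α) :
    ∃ c'' : ℝ, 0 < c'' ∧
      ∀ (h : ℝ → ℝ), (∀ x, h x = c * x ^ (α - 1)) →
      (∀ x ∈ Set.Ioc (0:ℝ) 1, h x ∈ Set.Ioo (0:ℝ) 1) →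
      StrictMonoOn h (Set.Ioc (0:ℝ) 1) →
      StrictMonoOn (fun x => x * (1 - h x)) (Set.Ioc (0:ℝ) 1) →
      ∀ (K : ℕ) (u : ℕ → ℝ), u 0 = 1 →
      (∀ k, k ≤ K → u k ∈ Set.Ioc (0:ℝ) 1) →
      (∀ k, k < K → u (k + 1) ≤ u k * (1 - h (u k) / 2)) →
      ∀ k, 1 ≤ k → k ≤ K → h (u k) ≤ c'' / k :=
  discrete_gronwall_decay_general c α hα
end
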